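/- arXiv:1102.4083 — 5 statements merged into one kernel-verified Lean document; each statement's English description precedes it below -/
import Mathlib

section
/- Let Φ be an irreducible reduced root system with a fixed choice of simple roots and corresponding dominance order ⪯ on the weight lattice X. If x and y are dominant weights with x ≺ y and y covers x in the dominance order restricted to dominant weights, then y − x is a positive root. -/
open scoped BigOperators

variable {V : Type*} [NormedAddCommGroup V] [InnerProductSpace ℝ V]

/-- The pairing `⟨x, y^∨⟩ = 2(x,y)/(y,y)` of `x` with the coroot of `y`. -/
noncomputable def pairing (x y : V) : ℝ := 2 * (inner ℝ x y : ℝ) / (inner ℝ y y : ℝ)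

/-- An irreducible, reduced, crystallographic root system in a Euclidean space `V`. -/
structure RootSystemData (V : Type*) [NormedAddCommGroup V] [InnerProductSpace ℝ V] :
    Type _ where
  Δ : Set V
  finite : Δ.Finite
  nonzero : ∀ α ∈ Δ, α ≠ 0
  spanning : Submodule.span ℝ Δ = ⊤
  neg_mem : ∀ α ∈ Δ, -α ∈ Δ
  reduced : ∀ α ∈ Δ, ∀ c : ℝ, c • α ∈ Δ → c = 1 ∨ c = -1
  crystallographic : ∀ α ∈ Δ, ∀ β ∈ Δ, ∃ n : ℤ, pairing α β = n
  reflect_mem : ∀ α ∈ Δ, ∀ β ∈ Δ, β - pairing β α • α ∈ Δ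
  irreducible : ∀ s t : Set V, s ∪ t = Δ →
    (∀ α ∈ s, ∀ β ∈ t, (inner ℝ α β : ℝ) = 0) → s = ∅ ∨ t = ∅

variable {R : RootSystemData V}

/-- A base (system of simple roots) of the root system, corresponding to a Weyl chamber. -/
structure Base (R : RootSystemData V) where
  S : Finset V
  subset : ↑S ⊆ R.Δ
  indep : LinearIndependent ℝ ((↑) : {x : V // x ∈ S} → V)
  decomp : ∀ α ∈ R.Δ, ∃ c : V → ℤ, α = ∑ β ∈ S, (c β : ℝ) • β ∧
    ((∀ β ∈ S, 0 ≤ c β) ∨ (∀ β ∈ S, c β ≤ 0))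

/-- `x` is dominant with respect to the chamber given by the base `B`. -/
def IsDominant (B : Base R) (x : V) : Prop := ∀ α ∈ B.S, 0 ≤ pairing x α

/-- `β` is a positive root with respect to the base `B`. -/
def Base.IsPos (B : Base R) (β : V) : Prop :=
  β ∈ R.Δ ∧ ∃ c : V → ℕ, β = ∑ α ∈ B.S, (c α : ℝ) • α

/-- The dominance order: `y - x` is a nonnegative integer combination of simple roots. -/
def domLE (B : Base R) (x y : V) : Prop :=
  ∃ c : V → ℕ, y - x = ∑ α ∈ B.S, (c α : ℝ) • α

/-- `x` is a weight: its pairing with every coroot is an integer. -/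
def IsWeight (R : RootSystemData V) (x : V) : Prop :=
  ∀ α ∈ R.Δ, ∃ n : ℤ, pairing x α = n

/-- An ample (`T`-equivariant ample) polytope for the toric variety of the Weyl fan:
vertices `μ B` indexed by Weyl chambers (equivalently, bases `B`), such that vertices at
adjacent chambers differ by a positive integer multiple of the separating root. The chamber
adjacent to `B` across the wall of the simple root `α ∈ B.S` is the one whose base is the
reflection `s_α(B)`. -/
structure AmplePolytope (R : RootSystemData V) where
  μ : Base R → V
  weight : ∀ B : Base R, IsWeight R (μ B)
  ample : ∀ B B' : Base R, ∀ α ∈ B.S,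
    (∀ β : V, β ∈ B'.S ↔ ∃ γ ∈ B.S, β = γ - pairing γ α • α) →
    ∃ r : ℤ, 0 < r ∧ μ B - μ B' = (r : ℝ) • α

/-- The polytope `P` itself: the convex hull of its vertices. -/
noncomputable def AmplePolytope.carrier (P : AmplePolytope R) : Set V :=
  convexHull ℝ (Set.range P.μ)

/-- The root lattice `Y`. -/
def rootLattice (R : RootSystemData V) : AddSubgroup V := AddSubgroup.closure R.Δ

/-- `Λ(P)`: the lattice points of `P` lying in the coset `Y + μ_σ` of the root lattice. -/
noncomputable def latticePts (P : AmplePolytope R) : Set V :=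
  {x | x ∈ P.carrier ∧ ∀ B : Base R, x - P.μ B ∈ rootLattice R}

/-- The polytope is special: each vertex is dominant for its own chamber. -/
def IsSpecial (P : AmplePolytope R) : Prop := ∀ B : Base R, ∀ α ∈ B.S, 0 ≤ pairing (P.μ B) α

/-- One step of the numbers game: firing the vertex corresponding to the simple root `α`
replaces `x` by its reflection `x - ⟨x, α^∨⟩ α`. -/
noncomputable def fireRoot (x α : V) : V := x - pairing x α • α

/-- The result of playing the firing sequence `l` starting from `x`. -/
noncomputable def playRes (x : V) (l : List V) : V := l.foldl fireRoot x

/-- Legality of a firing sequence for the usual numbers game: each fired simple root has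
negative amplitude when fired. -/
def NGLegal (B : Base R) : V → List V → Prop
  | _, [] => True
  | x, α :: t => α ∈ B.S ∧ pairing x α < 0 ∧ NGLegal B (fireRoot x α) t

/-- A configuration is allowed in the numbers game with a cutoff: all amplitudes `≥ -1`. -/
def AllowedConf (B : Base R) (x : V) : Prop := ∀ α ∈ B.S, -1 ≤ pairing x α

/-- Legality for the numbers game with a cutoff: fired amplitudes are negative, and every
configuration along the way (including the first and last) is allowed. -/
def CutoffLegal (B : Base R) : V → List V → Prop
  | x, [] => AllowedConf B x
  | x, α :: t => AllowedConf B x ∧ α ∈ B.S ∧ pairing x α < 0 ∧ CutoffLegal B (fireRoot x α) t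

/-- `x` is winning for the numbers game with a cutoff. -/
def CutoffWinning (B : Base R) (x : V) : Prop :=
  ∃ l : List V, CutoffLegal B x l ∧ IsDominant B (playRes x l)

/-- The winning criterion: `⟨x, β^∨⟩ ≥ -1` for all positive roots `β`. -/
def WinningCrit (B : Base R) (x : V) : Prop := ∀ β : V, B.IsPos β → -1 ≤ pairing x β

/-- `α` is `P`-progressive for `x`: either `x` is dominant and `α` has minimum length among
simple roots with `x + α ⪯ μ`, or `⟨x, α^∨⟩ ≤ -1`. -/
def Progressive (B : Base R) (P : AmplePolytope R) (x α : V) : Prop :=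
  α ∈ B.S ∧
    ((IsDominant B x ∧ domLE B (x + α) (P.μ B) ∧
        ∀ β ∈ B.S, domLE B (x + β) (P.μ B) → ‖α‖ ≤ ‖β‖) ∨
      pairing x α ≤ -1)

/-!
Choose a simple root `α` occurring in `y - x`, so that `x + α ⪯ y`. Given a positive root `β`
with `x + β ⪯ y` and `x + β` not dominant, pick a simple root `γ` with `⟨x + β, γ^∨⟩ < 0`.
Since `x` is dominant, `(β, γ) < 0`, so `β + γ` is a root. Since `y` is dominant,
`⟨y - x - β, γ^∨⟩ > 0`, and as distinct simple roots are at obtuse angles, `γ` occurs in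
`y - x - β`, i.e. `x + β + γ ⪯ y`. The height of `y - x - β` drops, so we reach a positive root
`β` with `x + β` dominant and `x ≺ x + β ⪯ y`; the covering hypothesis forces `x + β = y`.
-/

open scoped RealInnerProductSpace

section Pairing

lemma pairing_eq_mul_inner (x y : V) : pairing x y = 2 / ⟪y, y⟫ * ⟪x, y⟫ := by
  rw [pairing]; ring

lemma pairing_pos_iff {y : V} (hy : y ≠ 0) (x : V) : 0 < pairing x y ↔ 0 < ⟪x, y⟫ := by
  rw [pairing_eq_mul_inner, mul_pos_iff_of_pos_left (by positivity [real_inner_self_pos.2 hy])]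

lemma pairing_neg_iff {y : V} (hy : y ≠ 0) (x : V) : pairing x y < 0 ↔ ⟪x, y⟫ < 0 := by
  have hc : 0 < 2 / ⟪y, y⟫ := by positivity [real_inner_self_pos.2 hy]
  rw [pairing_eq_mul_inner]
  simpa using mul_lt_mul_iff_right₀ (c := 0) hc

lemma pairing_nonpos_iff {y : V} (hy : y ≠ 0) (x : V) : pairing x y ≤ 0 ↔ ⟪x, y⟫ ≤ 0 := by
  simpa only [not_lt] using (pairing_pos_iff hy x).not

lemma pairing_add_left (x z y : V) : pairing (x + z) y = pairing x y + pairing z y := by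
  simp only [pairing_eq_mul_inner, inner_add_left, mul_add]

lemma pairing_sub_left (x z y : V) : pairing (x - z) y = pairing x y - pairing z y := by
  simp only [pairing_eq_mul_inner, inner_sub_left, mul_sub]

lemma pairing_sum_smul_left {ι : Type*} (s : Finset ι) (c : ι → ℝ) (v : ι → V) (y : V) :
    pairing (∑ i ∈ s, c i • v i) y = ∑ i ∈ s, c i * pairing (v i) y := by
  simp only [pairing_eq_mul_inner, sum_inner, real_inner_smul_left, Finset.mul_sum]
  ring_nf

end Pairing

namespace RootSystemData

variable (R : RootSystemData V) {β γ : V}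

lemma pairing_mul_pairing_lt_four (hβ : β ∈ R.Δ) (hγ : γ ∈ R.Δ) (hne : γ ≠ β)
    (hne' : γ ≠ -β) : pairing β γ * pairing γ β < 4 := by
  have hβ0 := R.nonzero β hβ
  have hγ0 := R.nonzero γ hγ
  have hcs : |⟪β, γ⟫| < ‖β‖ * ‖γ‖ := by
    refine (abs_real_inner_le_norm β γ).lt_of_ne fun h => ?_
    obtain ⟨r, -, rfl⟩ := (norm_inner_eq_norm_iff hβ0 hγ0).1 (by rwa [Real.norm_eq_abs])
    rcases R.reduced β hβ r hγ with rfl | rfl <;> simp_all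
  have hsq : ⟪β, γ⟫ ^ 2 < (‖β‖ * ‖γ‖) ^ 2 := by
    simpa only [sq_abs] using pow_lt_pow_left₀ hcs (abs_nonneg _) two_ne_zero
  have hβn : 0 < ‖β‖ := norm_pos_iff.2 hβ0
  have hγn : 0 < ‖γ‖ := norm_pos_iff.2 hγ0
  rw [pairing, pairing, real_inner_self_eq_norm_sq, real_inner_self_eq_norm_sq,
    real_inner_comm β γ, div_mul_div_comm, div_lt_iff₀ (by positivity)]
  nlinarith

lemma sub_mem_of_inner_pos (hβ : β ∈ R.Δ) (hγ : γ ∈ R.Δ) (hne : β ≠ γ) (hpos : 0 < ⟪β, γ⟫) :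
    β - γ ∈ R.Δ := by
  obtain ⟨n, hn⟩ := R.crystallographic β hβ γ hγ
  obtain ⟨m, hm⟩ := R.crystallographic γ hγ β hβ
  have hn0 : 0 < n := by
    have := (pairing_pos_iff (R.nonzero γ hγ) β).2 hpos
    rw [hn] at this; exact_mod_cast this
  have hm0 : 0 < m := by
    have := (pairing_pos_iff (R.nonzero β hβ) γ).2 (by rwa [real_inner_comm])
    rw [hm] at this; exact_mod_cast this
  have hnm : n * m < 4 := by
    have hne' : γ ≠ -β := by
      rintro rfl
      rw [inner_neg_right, neg_pos] at hpos
      exact hpos.not_ge (real_inner_self_nonneg)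
    have := R.pairing_mul_pairing_lt_four hβ hγ hne.symm hne'
    rw [hn, hm] at this; exact_mod_cast this
  have hone : n = 1 ∨ m = 1 := by
    by_contra! h
    nlinarith [show 2 ≤ n by omega, show 2 ≤ m by omega]
  rcases hone with h | h
  · simpa [hn, h] using R.reflect_mem γ hγ β hβ
  · rw [← neg_sub]
    exact R.neg_mem _ (by simpa [hm, h] using R.reflect_mem β hβ γ hγ)

lemma add_mem_of_inner_neg (hβ : β ∈ R.Δ) (hγ : γ ∈ R.Δ) (hne : β ≠ -γ) (hneg : ⟪β, γ⟫ < 0) :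
    β + γ ∈ R.Δ := by
  simpa using R.sub_mem_of_inner_pos hβ (R.neg_mem γ hγ) hne (by simpa using hneg)

end RootSystemData

section Coefficients

variable {M : Type*} [AddCommGroup M] [Module ℝ M] [DecidableEq M]

lemma sum_add_single_smul {s : Finset M} {γ : M} (d : M → ℕ) (hγ : γ ∈ s) :
    ∑ v ∈ s, ((d + Pi.single γ 1 : M → ℕ) v : ℝ) • v = ∑ v ∈ s, (d v : ℝ) • v + γ := by
  simp [Pi.single_apply, add_smul, Finset.sum_add_distrib, hγ]

lemma sub_add_eq_sum_smul_of_eq_sum_add_single {s : Finset M} {x y γ : M} (d : M → ℕ)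
    (hγ : γ ∈ s) (h : y - x = ∑ v ∈ s, ((d + Pi.single γ 1 : M → ℕ) v : ℝ) • v) :
    y - (x + γ) = ∑ v ∈ s, (d v : ℝ) • v := by
  rw [← sub_sub, h, sum_add_single_smul d hγ, add_sub_cancel_right]

end Coefficients

section NatCoefficients

variable {ι : Type*} [DecidableEq ι]

lemma sum_add_single {s : Finset ι} {i : ι} (d : ι → ℕ) (hi : i ∈ s) :
    ∑ j ∈ s, (d + Pi.single i 1 : ι → ℕ) j = ∑ j ∈ s, d j + 1 := by
  simp [Finset.sum_add_distrib, hi]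

lemma exists_eq_add_single_of_pos {d : ι → ℕ} {i : ι} (h : 0 < d i) :
    ∃ d' : ι → ℕ, d = d' + Pi.single i 1 :=
  ⟨d - Pi.single i 1, by ext j; rcases eq_or_ne j i with rfl | hj <;> simp [*]; omega⟩

end NatCoefficients

namespace Base

variable (B : Base R) {α β γ : V}

lemma coeff_eq_zero_of_sum_smul_eq_zero {f : V → ℝ} (h : ∑ v ∈ B.S, f v • v = 0)
    (hα : α ∈ B.S) : f α = 0 :=
  (linearIndepOn_finset_iff (v := id)).1 B.indep f h α hα

lemma sub_notMem (hα : α ∈ B.S) (hβ : β ∈ B.S) (hne : α ≠ β) : α - β ∉ R.Δ := by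
  classical
  intro hmem
  obtain ⟨c, hc, hsign⟩ := B.decomp _ hmem
  have h0 : ∑ v ∈ B.S,
      ((c v : ℝ) - (Pi.single α 1 : V → ℝ) v + (Pi.single β 1 : V → ℝ) v) • v = 0 := by
    simp [sub_smul, add_smul, Finset.sum_add_distrib, Finset.sum_sub_distrib, Pi.single_apply,
      hα, hβ, ← hc]
  have hcα := B.coeff_eq_zero_of_sum_smul_eq_zero h0 hα
  have hcβ := B.coeff_eq_zero_of_sum_smul_eq_zero h0 hβ
  simp only [Pi.single_eq_same, Pi.single_eq_of_ne hne, Pi.single_eq_of_ne hne.symm, add_zero,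
    sub_zero] at hcα hcβ
  have hcα' : c α = 1 := by exact_mod_cast sub_eq_zero.1 hcα
  have hcβ' : c β = -1 := by exact_mod_cast eq_neg_of_add_eq_zero_left hcβ
  rcases hsign with h | h
  · exact absurd (h β hβ) (by omega)
  · exact absurd (h α hα) (by omega)

lemma inner_nonpos (hα : α ∈ B.S) (hβ : β ∈ B.S) (hne : α ≠ β) : ⟪α, β⟫ ≤ 0 :=
  not_lt.1 fun h =>
    B.sub_notMem hα hβ hne (R.sub_mem_of_inner_pos (B.subset hα) (B.subset hβ) hne h)

lemma coeff_pos_of_pairing_pos {d : V → ℕ} (hγ : γ ∈ B.S)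
    (h : 0 < pairing (∑ v ∈ B.S, (d v : ℝ) • v) γ) : 0 < d γ := by
  refine Nat.pos_of_ne_zero fun hd => h.not_ge ?_
  rw [pairing_sum_smul_left]
  refine Finset.sum_nonpos fun α hα => ?_
  rcases eq_or_ne α γ with rfl | hne
  · simp [hd]
  · exact mul_nonpos_of_nonneg_of_nonpos (Nat.cast_nonneg _)
      ((pairing_nonpos_iff (R.nonzero γ (B.subset hγ)) α).2 (B.inner_nonpos hα hγ hne))

lemma isPos_of_mem (hα : α ∈ B.S) : B.IsPos α := by
  classical
  exact ⟨B.subset hα, Pi.single α 1, by simpa using (sum_add_single_smul 0 hα).symm⟩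

variable {B}

lemma IsPos.add_of_mem (hβ : B.IsPos β) (hγ : γ ∈ B.S) (hmem : β + γ ∈ R.Δ) :
    B.IsPos (β + γ) := by
  classical
  obtain ⟨-, b, rfl⟩ := hβ
  exact ⟨hmem, b + Pi.single γ 1, (sum_add_single_smul b hγ).symm⟩

lemma IsPos.ne_neg (hβ : B.IsPos β) (hγ : γ ∈ B.S) : β ≠ -γ := by
  classical
  obtain ⟨-, b, rfl⟩ := hβ
  intro h
  have h0 := B.coeff_eq_zero_of_sum_smul_eq_zero
    (f := fun v => ((b + Pi.single γ 1 : V → ℕ) v : ℝ))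
    (by rw [sum_add_single_smul b hγ, h, neg_add_cancel]) hγ
  simp only [Pi.add_apply, Pi.single_eq_same, Nat.cast_add, Nat.cast_one] at h0
  exact Nat.cast_add_one_ne_zero (b γ) h0

lemma IsPos.domLE_add (hβ : B.IsPos β) (x : V) : domLE B x (x + β) := by
  obtain ⟨-, b, hb⟩ := hβ
  exact ⟨b, by rwa [add_sub_cancel_left]⟩

end Base

section Dominant

variable {B : Base R} {x y : V}

theorem exists_isPos_isDominant_add (hxd : IsDominant B x) (hyd : IsDominant B y) {β : V}
    (hβ : B.IsPos β) (hle : domLE B (x + β) y) :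
    ∃ β', B.IsPos β' ∧ IsDominant B (x + β') ∧ domLE B (x + β') y := by
  classical
  obtain ⟨d, hd⟩ := hle
  induction hn : ∑ α ∈ B.S, d α using Nat.strong_induction_on generalizing β d with
  | _ n ih =>
  by_cases hdom : IsDominant B (x + β)
  · exact ⟨β, hβ, hdom, d, hd⟩
  obtain ⟨γ, hγ, hneg⟩ : ∃ γ ∈ B.S, pairing (x + β) γ < 0 := by simpa [IsDominant] using hdom
  have hβγ : ⟪β, γ⟫ < 0 := by
    rw [pairing_add_left] at hneg
    rw [← pairing_neg_iff (R.nonzero γ (B.subset hγ))]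
    linarith [hxd γ hγ]
  have hdγ : 0 < d γ :=
    B.coeff_pos_of_pairing_pos hγ (by rw [← hd, pairing_sub_left]; linarith [hyd γ hγ])
  obtain ⟨d', rfl⟩ := exists_eq_add_single_of_pos hdγ
  have hβγ_pos : B.IsPos (β + γ) :=
    hβ.add_of_mem hγ (R.add_mem_of_inner_neg hβ.1 (B.subset hγ) (hβ.ne_neg hγ) hβγ)
  refine ih _ ?_ hβγ_pos d' ?_ rfl
  · rw [← hn, sum_add_single d' hγ]
    omega
  · rw [← add_assoc]
    exact sub_add_eq_sum_smul_of_eq_sum_add_single d' hγ hd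

end Dominant

theorem stmt0_general {V : Type*} [NormedAddCommGroup V] [InnerProductSpace ℝ V]
    {R : RootSystemData V} (B : Base R) (x y : V)
    (hxd : IsDominant B x) (hyd : IsDominant B y)
    (hlt : domLE B x y ∧ x ≠ y)
    (hcov : ∀ t : V, IsDominant B t → domLE B x t → domLE B t y → t = x ∨ t = y) :
    B.IsPos (y - x) := by
  classical
  obtain ⟨⟨c, hc⟩, hne⟩ := hlt
  obtain ⟨α, hα, hcα⟩ := Finset.exists_ne_zero_of_sum_ne_zero (hc ▸ sub_ne_zero.2 hne.symm)
  obtain ⟨c', rfl⟩ := exists_eq_add_single_of_pos (Nat.pos_of_ne_zero (by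
    exact_mod_cast left_ne_zero_of_smul hcα))
  obtain ⟨β, hβ, hdom, hle⟩ := exists_isPos_isDominant_add hxd hyd (B.isPos_of_mem hα)
    ⟨c', sub_add_eq_sum_smul_of_eq_sum_add_single c' hα hc⟩
  rcases hcov (x + β) hdom (hβ.domLE_add x) hle with h | h
  · exact absurd (add_eq_left.1 h) (R.nonzero β hβ.1)
  · rwa [← h, add_sub_cancel_left]

/-- If `x` and `y` are dominant weights with `x ≺ y` and `y` covers `x` in the
dominance order restricted to dominant weights, then `y - x` is a positive root. -/
theorem stmt0 {V : Type*} [NormedAddCommGroup V] [InnerProductSpace ℝ V]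
    [FiniteDimensional ℝ V] {R : RootSystemData V} (B : Base R) (x y : V)
    (hxw : IsWeight R x) (hyw : IsWeight R y)
    (hxd : IsDominant B x) (hyd : IsDominant B y)
    (hlt : domLE B x y ∧ x ≠ y)
    (hcov : ∀ t : V, IsDominant B t → domLE B x t → domLE B t y → t = x ∨ t = y) :
    B.IsPos (y - x) :=
  stmt0_general B x y hxd hyd hlt hcov
end

section
/- Let P be a special ample polytope and embed X into ℤ^I by ι(x)_i = ⟨x, α_i^∨⟩. If x, y ∈ X are such that ι(y) is obtained from ι(x) by playing the numbers game with a cutoff, then x ∈ Λ(P) if and only if y ∈ Λ(P). -/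
/-!
The polytope is an intersection of translated cones: `v ∈ P` iff, for every chamber `C`,
`μ_C - v` is a nonnegative combination of the simple roots of `C`. The vertices satisfy this by
a descent across walls, and conversely a separating functional would be maximised at some
vertex `μ_C`, where ampleness makes it nonnegative on the simple roots of `C`.

For a weight, a legal firing in the game with a cutoff has amplitude exactly `-1`, so it is
`x ↦ x + α`, and firing `-α` at `x + α` undoes it. It therefore suffices to show that
`μ_C - x - α` lies in the cone of every `C`. This is clear when `α` is
negative for `C`; otherwise we induct on the height of `α`, reflecting `C` in the simple roots
`β` with `⟨α, β^∨⟩ > 0`, which lowers that height. The coset condition makes all coordinates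
integers, which turns the strict inequalities of the argument into the bounds it needs.
-/

open scoped BigOperators

variable {V : Type*} [NormedAddCommGroup V] [InnerProductSpace ℝ V]

variable {R : RootSystemData V}

section Pairing

variable {x α β : V}

lemma pairing_pos_iff_s8 (hα : α ≠ 0) : 0 < pairing x α ↔ 0 < inner ℝ x α := by
  have := real_inner_self_pos.2 hα
  rw [pairing, div_pos_iff_of_pos_right this, mul_pos_iff_of_pos_left two_pos]

lemma pairing_nonneg_iff (hα : α ≠ 0) : 0 ≤ pairing x α ↔ 0 ≤ inner ℝ x α := by
  have := real_inner_self_pos.2 hα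
  rw [pairing, le_div_iff₀ this, zero_mul, mul_nonneg_iff_of_pos_left two_pos]

lemma pairing_nonneg_of_inner_nonneg (h : 0 ≤ inner ℝ x α) : 0 ≤ pairing x α :=
  div_nonneg (by positivity) real_inner_self_nonneg

lemma pairing_pos_comm (hα : α ≠ 0) (hβ : β ≠ 0) : 0 < pairing α β ↔ 0 < pairing β α := by
  rw [pairing_pos_iff_s8 hβ, pairing_pos_iff_s8 hα, real_inner_comm]

lemma pairing_self (hα : α ≠ 0) : pairing α α = 2 := by
  have := real_inner_self_pos.2 hα
  rw [pairing]
  field_simp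

lemma pairing_nonpos_comm (hα : α ≠ 0) (hβ : β ≠ 0) : pairing α β ≤ 0 ↔ pairing β α ≤ 0 := by
  simpa only [not_lt] using (pairing_pos_comm hα hβ).not

lemma pairing_neg_right (x α : V) : pairing x (-α) = -pairing x α := by
  simp [pairing, inner_neg_right, neg_div]

lemma one_le_pairing (hα : α ∈ R.Δ) (hβ : β ∈ R.Δ) (h : 0 < pairing α β) : 1 ≤ pairing α β := by
  obtain ⟨n, hn⟩ := R.crystallographic α hα β hβ
  rw [hn] at h ⊢
  exact_mod_cast (show (0 : ℤ) < n by exact_mod_cast h)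

noncomputable def coroot (α : V) : V →ₗ[ℝ] ℝ := (2 / inner ℝ α α) • innerₛₗ ℝ α

@[simp] lemma coroot_apply (α v : V) : coroot α v = pairing v α := by
  simp only [coroot, LinearMap.smul_apply, innerₛₗ_apply_apply, smul_eq_mul, pairing,
    real_inner_comm α v]
  ring

noncomputable def rootReflection (hα : α ≠ 0) : V ≃ₗ[ℝ] V :=
  Module.reflection (f := coroot α) (by rw [coroot_apply, pairing_self hα])

lemma rootReflection_apply (hα : α ≠ 0) (v : V) :
    rootReflection hα v = v - pairing v α • α := by
  simp [rootReflection, Module.reflection_apply]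

@[simp] lemma rootReflection_rootReflection (hα : α ≠ 0) (v : V) :
    rootReflection hα (rootReflection hα v) = v :=
  Module.involutive_reflection _ v

@[simp] lemma rootReflection_symm (hα : α ≠ 0) :
    (rootReflection hα).symm = rootReflection hα :=
  Module.reflection_symm _

lemma rootReflection_toEquiv_symm (hα : α ≠ 0) :
    (rootReflection hα).toEquiv.symm = (rootReflection hα).toEquiv := by
  ext v; simp

lemma IsWeight.pairing_eq_neg_one (hx : IsWeight R x) (hα : α ∈ R.Δ)
    (h₁ : -1 ≤ pairing x α) (h₀ : pairing x α < 0) : pairing x α = -1 := by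
  obtain ⟨n, hn⟩ := hx α hα
  rw [hn] at h₁ h₀ ⊢
  have : -1 ≤ n := by exact_mod_cast h₁
  have : n < 0 := by exact_mod_cast h₀
  exact_mod_cast (show n = -1 by omega)

lemma fireRoot_eq_add (h : pairing x α = -1) : fireRoot x α = x + α := by
  rw [fireRoot, h, neg_one_smul, sub_neg_eq_add]

lemma IsWeight.add_root (hx : IsWeight R x) (hα : α ∈ R.Δ) : IsWeight R (x + α) := by
  intro β hβ
  obtain ⟨a, ha⟩ := hx β hβ
  obtain ⟨b, hb⟩ := R.crystallographic α hα β hβ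
  exact ⟨a + b, by rw [← coroot_apply, map_add, coroot_apply, coroot_apply, ha, hb, Int.cast_add]⟩

end Pairing

namespace Base

@[ext] lemma ext {C D : Base R} (h : C.S = D.S) : C = D := by
  cases C; cases D; subst h; rfl

instance finite : Finite (Base R) :=
  have := R.finite.finite_subsets.to_subtype
  Finite.of_injective (fun C : Base R => (⟨C.S, C.subset⟩ : {s : Set V | s ⊆ R.Δ}))
    fun _ _ h => Base.ext (Finset.coe_injective (congrArg Subtype.val h))

variable (C : Base R)

lemma ne_zero_of_mem {β : V} (hβ : β ∈ C.S) : β ≠ 0 := R.nonzero β (C.subset hβ)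

lemma span_eq_top : Submodule.span ℝ (C.S : Set V) = ⊤ := by
  rw [← top_le_iff, ← R.spanning, Submodule.span_le]
  intro α hα
  obtain ⟨c, rfl, -⟩ := C.decomp α hα
  exact Submodule.sum_mem _ fun β hβ => Submodule.smul_mem _ _ (Submodule.subset_span hβ)

noncomputable def basis : Module.Basis C.S ℝ V :=
  Module.Basis.mk C.indep (by rw [Subtype.range_coe_subtype, Finset.setOfPred_mem, C.span_eq_top])

@[simp] lemma basis_apply (i : C.S) : C.basis i = i := Module.Basis.mk_apply _ _ _

lemma repr_sum (c : V → ℝ) (i : C.S) : C.basis.repr (∑ β ∈ C.S, c β • β) i = c i := by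
  have : ∑ β ∈ C.S, c β • β = C.basis.equivFun.symm (fun j => c j) := by
    rw [Module.Basis.equivFun_symm_apply, ← Finset.sum_coe_sort C.S]
    simp
  rw [this, ← Module.Basis.equivFun_apply, LinearEquiv.apply_symm_apply]

lemma repr_coe_self (i : C.S) : C.basis.repr i i = 1 := by
  rw [← C.basis_apply, C.basis.repr_self, Finsupp.single_eq_same]

lemma repr_coe_of_ne {i j : C.S} (h : (j : V) ≠ i) : C.basis.repr i j = 0 := by
  rw [← C.basis_apply, C.basis.repr_self, Finsupp.single_eq_of_ne (Subtype.coe_ne_coe.1 h)]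

lemma map_eq_sum_repr (f : V →ₗ[ℝ] ℝ) (v : V) : f v = ∑ i, C.basis.repr v i * f i := by
  conv_lhs => rw [← C.basis.sum_repr v]
  simp [map_sum]

def cone : Set V := {v | ∀ i, 0 ≤ C.basis.repr v i}

variable {C}

lemma add_mem_cone {v w : V} (hv : v ∈ C.cone) (hw : w ∈ C.cone) : v + w ∈ C.cone :=
  fun i => by simpa using add_nonneg (hv i) (hw i)

lemma smul_mem_cone {t : ℝ} (ht : 0 ≤ t) {v : V} (hv : v ∈ C.cone) : t • v ∈ C.cone :=
  fun i => by simpa using mul_nonneg ht (hv i)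

lemma zero_mem_cone : (0 : V) ∈ C.cone := fun i => by simp

lemma map_nonneg_of_mem_cone (f : V →ₗ[ℝ] ℝ) (hf : ∀ β ∈ C.S, 0 ≤ f β) {v : V}
    (hv : v ∈ C.cone) : 0 ≤ f v := by
  rw [C.map_eq_sum_repr]
  exact Finset.sum_nonneg fun i _ => mul_nonneg (hv i) (hf i i.2)

lemma mem_cone_or_neg_mem_cone {α : V} (hα : α ∈ R.Δ) : α ∈ C.cone ∨ -α ∈ C.cone := by
  obtain ⟨c, rfl, hc | hc⟩ := C.decomp α hα
  · exact Or.inl fun i => by rw [repr_sum]; exact_mod_cast hc i i.2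
  · right
    intro i
    rw [map_neg, Finsupp.neg_apply, repr_sum, neg_nonneg]
    exact_mod_cast hc i i.2

lemma repr_mem_rootLattice {v : V} (hv : v ∈ rootLattice R) (i : C.S) :
    ∃ m : ℤ, C.basis.repr v i = m := by
  induction hv using AddSubgroup.closure_induction with
  | mem α hα =>
    obtain ⟨c, rfl, -⟩ := C.decomp α hα
    exact ⟨c i, by rw [repr_sum]⟩
  | zero => exact ⟨0, by simp⟩
  | add v w _ _ hv hw =>
    obtain ⟨a, ha⟩ := hv
    obtain ⟨b, hb⟩ := hw
    exact ⟨a + b, by simp [ha, hb]⟩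
  | neg v _ hv =>
    obtain ⟨a, ha⟩ := hv
    exact ⟨-a, by simp [ha]⟩

variable (C) in
noncomputable def height : V →ₗ[ℝ] ℝ := ∑ i, C.basis.coord i

lemma height_apply (v : V) : C.height v = ∑ i, C.basis.repr v i := by
  simp [height]

lemma height_coe (i : C.S) : C.height i = 1 := by
  rw [height_apply, Finset.sum_eq_single_of_mem i (Finset.mem_univ _)
    fun j _ hj => C.repr_coe_of_ne (Subtype.coe_ne_coe.2 hj), C.repr_coe_self]

lemma height_pos {v : V} (hv : v ∈ C.cone) (h0 : v ≠ 0) : 0 < C.height v := by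
  rw [height_apply]
  refine lt_of_le_of_ne (Finset.sum_nonneg fun i _ => hv i) fun h => h0 ?_
  have hz := (Finset.sum_eq_zero_iff_of_nonneg fun i _ => hv i).1 h.symm
  exact C.basis.ext_elem fun i => by simpa using hz i (Finset.mem_univ _)

variable (C) {β : V}

noncomputable def reflect (hβ : β ∈ R.Δ) : Base R where
  S := C.S.map (rootReflection (R.nonzero β hβ)).toEquiv.toEmbedding
  subset δ hδ := by
    rw [Finset.mem_coe, Finset.mem_map_equiv, rootReflection_toEquiv_symm] at hδ
    have := R.reflect_mem β hβ _ (C.subset hδ)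
    rwa [← rootReflection_apply (R.nonzero β hβ), LinearEquiv.coe_toEquiv,
      rootReflection_rootReflection] at this
  indep := by
    refine (linearIndependent_equiv ((rootReflection (R.nonzero β hβ)).toEquiv.subtypeEquiv
      fun γ => ?_)).1 (C.indep.map' _ (rootReflection (R.nonzero β hβ)).ker)
    simp [Finset.mem_map_equiv, rootReflection_toEquiv_symm]
  decomp α hα := by
    obtain ⟨c, hc, hsign⟩ := C.decomp (rootReflection (R.nonzero β hβ) α) (by
      simpa [rootReflection_apply] using R.reflect_mem β hβ α hα)
    refine ⟨fun δ => c (rootReflection (R.nonzero β hβ) δ), ?_, ?_⟩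
    · rw [Finset.sum_map]
      calc α = rootReflection (R.nonzero β hβ) (rootReflection (R.nonzero β hβ) α) := by simp
        _ = _ := by simp [hc, map_sum]
    · simp only [Finset.mem_map_equiv, rootReflection_toEquiv_symm]
      exact hsign.imp (fun h δ hδ => h _ hδ) (fun h δ hδ => h _ hδ)

lemma mem_reflect_S (hβ : β ∈ R.Δ) {δ : V} :
    δ ∈ (C.reflect hβ).S ↔ rootReflection (R.nonzero β hβ) δ ∈ C.S := by
  simp [reflect, Finset.mem_map_equiv, rootReflection_toEquiv_symm]

noncomputable def reflectEquiv (hβ : β ∈ R.Δ) : C.S ≃ (C.reflect hβ).S :=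
  (rootReflection (R.nonzero β hβ)).toEquiv.subtypeEquiv fun γ => by simp [mem_reflect_S]

lemma reflect_basis (hβ : β ∈ R.Δ) :
    (C.reflect hβ).basis =
      (C.basis.map (rootReflection (R.nonzero β hβ))).reindex (C.reflectEquiv hβ) :=
  Module.Basis.eq_of_apply_eq fun j => by simp [reflectEquiv, Equiv.subtypeEquiv_symm]

lemma repr_reflect (hβ : β ∈ R.Δ) (v : V) (i : C.S) :
    (C.reflect hβ).basis.repr v (C.reflectEquiv hβ i) =
      C.basis.repr (rootReflection (R.nonzero β hβ) v) i := by
  simp [reflect_basis]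

lemma mem_reflect_cone_iff (hβ : β ∈ R.Δ) {v : V} :
    v ∈ (C.reflect hβ).cone ↔ rootReflection (R.nonzero β hβ) v ∈ C.cone := by
  constructor
  · intro h i
    simpa [repr_reflect] using h (C.reflectEquiv hβ i)
  · intro h j
    obtain ⟨i, rfl⟩ := (C.reflectEquiv hβ).surjective j
    rw [repr_reflect]
    exact h i

lemma height_reflect (hβ : β ∈ R.Δ) (v : V) :
    (C.reflect hβ).height v = C.height (rootReflection (R.nonzero β hβ) v) := by
  rw [height_apply, height_apply, ← Equiv.sum_comp (C.reflectEquiv hβ)]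
  simp only [repr_reflect]

variable {C} {α : V}

lemma exists_height_eq_int {v : V} (hv : v ∈ rootLattice R) : ∃ m : ℤ, C.height v = m := by
  choose m hm using C.repr_mem_rootLattice hv
  exact ⟨∑ i, m i, by simp [height_apply, hm]⟩

lemma one_le_height (hα : α ∈ R.Δ) (hαC : α ∈ C.cone) : 1 ≤ C.height α := by
  obtain ⟨m, hm⟩ := C.exists_height_eq_int (AddSubgroup.subset_closure hα)
  have hpos := C.height_pos hαC (R.nonzero α hα)
  rw [hm] at hpos ⊢
  exact_mod_cast (show (0 : ℤ) < m by exact_mod_cast hpos)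

lemma mem_S_of_height_eq_one (hα : α ∈ R.Δ) (hαC : α ∈ C.cone) (h : C.height α = 1) :
    α ∈ C.S := by
  classical
  choose m hm using C.repr_mem_rootLattice (AddSubgroup.subset_closure hα)
  rw [height_apply] at h
  obtain ⟨i, -, hi⟩ := Finset.exists_ne_zero_of_sum_ne_zero (h ▸ one_ne_zero)
  have hi1 : 1 ≤ C.basis.repr α i := by
    have := hαC i
    rw [hm] at this hi ⊢
    exact_mod_cast (show (0 : ℤ) < m i by exact_mod_cast lt_of_le_of_ne this (Ne.symm hi))
  rw [← Finset.add_sum_erase _ _ (Finset.mem_univ i)] at h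
  have hrest := (Finset.sum_eq_zero_iff_of_nonneg fun j _ => hαC j).1
    (le_antisymm (by linarith) (Finset.sum_nonneg fun j _ => hαC j))
  have hαi : α = i := C.basis.ext_elem fun j => by
    by_cases hj : j = i
    · rw [Finset.sum_eq_zero hrest] at h
      rw [hj, repr_coe_self]
      linarith
    · rw [hrest j (Finset.mem_erase.2 ⟨hj, Finset.mem_univ j⟩),
        C.repr_coe_of_ne (Subtype.coe_ne_coe.2 hj)]
  exact hαi ▸ i.2

/-- On `D.cone` the height for `C` dominates the height for `D`, so a simple root of `C` has
`D`-height `1` and is simple for `D`. -/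
lemma eq_of_forall_mem_cone {D : Base R} (h : ∀ δ ∈ D.S, δ ∈ C.cone) : D = C := by
  have hDC : ∀ v ∈ D.cone, D.height v ≤ C.height v := fun v hv => sub_nonneg.1 <| by
    simpa using D.map_nonneg_of_mem_cone (C.height - D.height) (fun δ hδ => by
      simpa [(D.height_coe ⟨δ, hδ⟩ : D.height δ = 1)] using
        C.one_le_height (D.subset hδ) (h δ hδ)) hv
  have hCD : C.S ⊆ D.S := fun β hβ => by
    have hβ1 : C.height β = 1 := C.height_coe ⟨β, hβ⟩
    have hβD : β ∈ D.cone := (D.mem_cone_or_neg_mem_cone (C.subset hβ)).resolve_right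
      fun hneg => by
        have := D.map_nonneg_of_mem_cone C.height (fun δ hδ =>
          zero_le_one.trans (C.one_le_height (D.subset hδ) (h δ hδ))) hneg
        rw [map_neg, hβ1] at this
        linarith
    exact D.mem_S_of_height_eq_one (C.subset hβ) hβD
      (le_antisymm ((hDC β hβD).trans_eq hβ1) (D.one_le_height (C.subset hβ) hβD))
  refine Base.ext (Finset.eq_of_subset_of_card_le hCD ?_).symm
  rw [← Fintype.card_coe, ← Fintype.card_coe]
  exact (Fintype.card_congr (D.basis.indexEquiv C.basis)).le

lemma exists_pairing_pos {v : V} (hv : v ∈ C.cone) (h0 : v ≠ 0) :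
    ∃ i : C.S, 0 < pairing v i := by
  by_contra! hle
  have hsum : inner ℝ v v = ∑ i, C.basis.repr v i * inner ℝ v (i : V) :=
    C.map_eq_sum_repr (innerₛₗ ℝ v) v
  have : inner ℝ v v ≤ 0 := hsum ▸ Finset.sum_nonpos fun i _ =>
    mul_nonpos_of_nonneg_of_nonpos (hv i)
      (not_lt.1 fun h => (hle i).not_gt ((pairing_pos_iff_s8 (C.ne_zero_of_mem i.2)).2 h))
  exact (real_inner_self_pos.2 h0).not_ge this

lemma pairing_nonpos_of_ne {i j : C.S} (h : i ≠ j) : pairing (i : V) j ≤ 0 := by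
  -- otherwise the root `s_j i = i - ⟨i, j^∨⟩ j` would have coordinates of both signs
  by_contra! hpos
  have hroot := R.reflect_mem j (C.subset j.2) i (C.subset i.2)
  have hij : (i : V) ≠ j := Subtype.coe_ne_coe.2 h
  rcases C.mem_cone_or_neg_mem_cone hroot with hw | hw
  · have := hw j
    simp only [map_sub, map_smul, Finsupp.coe_sub, Finsupp.coe_smul, Pi.sub_apply,
      Pi.smul_apply, smul_eq_mul, repr_coe_self, C.repr_coe_of_ne hij.symm] at this
    linarith
  · have := hw i
    simp only [map_neg, map_sub, map_smul, Finsupp.coe_neg, Finsupp.coe_sub, Finsupp.coe_smul,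
      Pi.neg_apply, Pi.sub_apply, Pi.smul_apply, smul_eq_mul, repr_coe_self,
      C.repr_coe_of_ne hij] at this
    linarith

lemma repr_nonneg_of_mem_reflect_cone (i : C.S) {w : V} {t : ℝ}
    (hw : w - t • (i : V) ∈ (C.reflect (C.subset i.2)).cone) {j : C.S} (hj : j ≠ i) :
    0 ≤ C.basis.repr w j := by
  have h := (C.mem_reflect_cone_iff _).1 hw j
  rw [rootReflection_apply] at h
  simpa [C.repr_coe_of_ne (Subtype.coe_ne_coe.2 hj)] using h

lemma mem_reflect_cone_of_ne (hα : α ∈ R.Δ) (hαC : α ∈ C.cone) (i : C.S) (hne : α ≠ i) :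
    α ∈ (C.reflect (C.subset i.2)).cone := by
  rw [mem_reflect_cone_iff]
  refine (C.mem_cone_or_neg_mem_cone (R.reflect_mem _ (C.subset i.2) α hα)).elim
    (fun h => by rwa [rootReflection_apply]) fun h => ?_
  -- otherwise `α` is a nonnegative multiple of `i`, hence `i` by reducedness
  have hcoord : ∀ j : C.S, j ≠ i → C.basis.repr α j = 0 := fun j hj => by
    have := h j
    simp [C.repr_coe_of_ne (Subtype.coe_ne_coe.2 hj)] at this
    exact le_antisymm this (hαC j)
  have hαi : α = C.basis.repr α i • (i : V) := C.basis.ext_elem fun j => by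
    by_cases hj : j = i
    · subst hj
      simp [repr_coe_self]
    · simp [hcoord j hj, C.repr_coe_of_ne (Subtype.coe_ne_coe.2 hj)]
  rcases R.reduced i (C.subset i.2) _ (hαi ▸ hα) with h1 | h1
  · exact (hne (by rw [hαi, h1, one_smul])).elim
  · linarith [hαC i]

lemma height_reflect_eq (i : C.S) (v : V) :
    (C.reflect (C.subset i.2)).height v = C.height v - pairing v i := by
  rw [height_reflect, rootReflection_apply, map_sub, map_smul, height_coe, smul_eq_mul, mul_one]

end Base

lemma IsSpecial.pairing_nonneg {P : AmplePolytope R} (hP : IsSpecial P) (C : Base R) {v : V}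
    (hv : v ∈ C.cone) : 0 ≤ pairing (P.μ C) v :=
  pairing_nonneg_of_inner_nonneg <| C.map_nonneg_of_mem_cone (innerₛₗ ℝ (P.μ C))
    (fun β hβ => (pairing_nonneg_iff (C.ne_zero_of_mem hβ)).1 (hP C β hβ)) hv

namespace AmplePolytope

variable (P : AmplePolytope R)

lemma exists_sub_reflect (C : Base R) {β : V} (hβ : β ∈ C.S) :
    ∃ r : ℤ, 0 < r ∧ P.μ C - P.μ (C.reflect (C.subset hβ)) = (r : ℝ) • β :=
  P.ample C _ β hβ fun δ => by
    have hβ0 := R.nonzero β (C.subset hβ)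
    simp only [C.mem_reflect_S, ← rootReflection_apply hβ0]
    constructor
    · exact fun h => ⟨_, h, (rootReflection_rootReflection hβ0 δ).symm⟩
    · rintro ⟨γ, hγ, rfl⟩
      rwa [rootReflection_rootReflection]

/-- Crossing a wall of `D` whose simple root is negative for `C` strictly increases the
`C`-height of the vertex, and no such wall exists only for `D = C`. -/
theorem vertex_sub_mem_cone (C D : Base R) : P.μ C - P.μ D ∈ C.cone := by
  induction D using (Finite.wellFounded_of_trans_of_irrefl
    (InvImage (· > ·) fun D => C.height (P.μ D))).induction with
  | _ D ih =>
  by_cases h : ∀ δ ∈ D.S, δ ∈ C.cone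
  · rw [Base.eq_of_forall_mem_cone h, sub_self]
    exact Base.zero_mem_cone
  push Not at h
  obtain ⟨γ, hγ, hγC⟩ := h
  have hneg : -γ ∈ C.cone := (C.mem_cone_or_neg_mem_cone (D.subset hγ)).resolve_left hγC
  obtain ⟨r, hr, hμ⟩ := P.exists_sub_reflect D hγ
  have hr' : (0 : ℝ) < r := by exact_mod_cast hr
  have hstep : P.μ (D.reflect (D.subset hγ)) - P.μ D = (r : ℝ) • -γ := by
    rw [← neg_sub, hμ, smul_neg]
  have hlt : C.height (P.μ D) < C.height (P.μ (D.reflect (D.subset hγ))) := by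
    have hpos := C.height_pos hneg (neg_ne_zero.2 (D.ne_zero_of_mem hγ))
    have hdiff := congrArg C.height hstep
    rw [map_sub, map_smul, smul_eq_mul] at hdiff
    nlinarith
  have := Base.add_mem_cone (ih _ hlt) (Base.smul_mem_cone hr'.le hneg)
  rwa [← hstep, sub_add_sub_cancel] at this

theorem mem_carrier_iff [Nonempty (Base R)] {v : V} :
    v ∈ P.carrier ↔ ∀ C : Base R, P.μ C - v ∈ C.cone := by
  constructor
  · intro hv C
    refine convexHull_min (t := {w | P.μ C - w ∈ C.cone})
      (Set.range_subset_iff.2 (P.vertex_sub_mem_cone C)) (fun w₁ h₁ w₂ h₂ a b ha hb hab i => ?_) hv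
    have h₁ := h₁ i
    have h₂ := h₂ i
    obtain rfl : b = 1 - a := by linarith
    simp only [map_sub, map_add, map_smul, Finsupp.coe_sub, Finsupp.coe_add,
      Finsupp.coe_smul, Pi.sub_apply, Pi.add_apply, Pi.smul_apply, smul_eq_mul] at h₁ h₂ ⊢
    nlinarith [mul_nonneg ha h₁, mul_nonneg hb h₂]
  · intro h
    by_contra hv
    obtain ⟨f, u, hfP, hfv⟩ := geometric_hahn_banach_closed_point (convex_convexHull ℝ _)
      ((Set.finite_range P.μ).isCompact_convexHull (𝕜 := ℝ)).isClosed hv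
    obtain ⟨C, hC⟩ := Finite.exists_max fun C => f (P.μ C)
    have hf : ∀ β ∈ C.S, 0 ≤ f β := fun β hβ => by
      obtain ⟨r, hr, hμ⟩ := P.exists_sub_reflect C hβ
      have hdiff := congrArg f hμ
      rw [map_sub, map_smul, smul_eq_mul] at hdiff
      have hr' : (0 : ℝ) < r := by exact_mod_cast hr
      nlinarith [hC (C.reflect (C.subset hβ))]
    have hCv := C.map_nonneg_of_mem_cone f.toLinearMap hf (h C)
    have hCu := hfP _ (subset_convexHull ℝ _ ⟨C, rfl⟩)
    simp only [ContinuousLinearMap.coe_coe, map_sub] at hCv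
    linarith

end AmplePolytope

section RootStep

variable {P : AmplePolytope R} {x α : V}

lemma sub_simple_root_mem_cone (hP : IsSpecial P) {C : Base R} (i : C.S)
    (hxi : pairing x i = -1) (hx : P.μ C - x ∈ C.cone) (hY : P.μ C - x ∈ rootLattice R) :
    P.μ C - x - i ∈ C.cone := by
  intro j
  rw [map_sub, Finsupp.sub_apply]
  by_cases hj : j = i
  swap
  · rw [C.repr_coe_of_ne (Subtype.coe_ne_coe.2 hj), sub_zero]
    exact hx j
  subst hj
  rw [C.repr_coe_self, sub_nonneg]
  by_contra! hlt
  have hzero : C.basis.repr (P.μ C - x) j = 0 := by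
    obtain ⟨m, hm⟩ := C.repr_mem_rootLattice hY j
    have h₀ := hx j
    rw [hm] at hlt h₀ ⊢
    have : 0 ≤ m := by exact_mod_cast h₀
    have : m < 1 := by exact_mod_cast hlt
    exact_mod_cast (show m = 0 by omega)
  have hle : pairing (P.μ C - x) j ≤ 0 := by
    rw [← coroot_apply, C.map_eq_sum_repr]
    refine Finset.sum_nonpos fun k _ => ?_
    by_cases hk : k = j
    · rw [hk, hzero, zero_mul]
    · exact mul_nonpos_of_nonneg_of_nonpos (hx k) (by
        rw [coroot_apply]; exact C.pairing_nonpos_of_ne hk)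
  have hsub : pairing (P.μ C - x) j = pairing (P.μ C) j + 1 := by
    rw [← coroot_apply, map_sub, coroot_apply, coroot_apply, hxi, sub_neg_eq_add]
  linarith [hP C j j.2]

/-- If the `γ`-coordinate were `≤ -1`, then `⟨μ_C, α^∨⟩ ≤ 1 - ⟨γ, α^∨⟩`; but the vertex `μ_C - rγ`
across the wall of `γ` is dominant for a chamber in which `α` is still positive, which forces
`⟨μ_C, α^∨⟩ ≥ r ⟨γ, α^∨⟩`. -/
lemma repr_sub_root_nonneg_of_pairing_nonpos (hP : IsSpecial P) {C : Base R} (hα : α ∈ R.Δ)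
    (hαC : α ∈ C.cone) (hxα : pairing x α = -1) (hY : P.μ C - x - α ∈ rootLattice R)
    (γ : C.S) (hne : α ≠ γ) (hγ : 0 < pairing α γ)
    (hcoord : ∀ j : C.S, j ≠ γ → 0 ≤ C.basis.repr (P.μ C - x - α) j)
    (hpair : ∀ j : C.S, j ≠ γ → pairing α j ≤ 0) :
    0 ≤ C.basis.repr (P.μ C - x - α) γ := by
  classical
  have hα0 := R.nonzero α hα
  by_contra! hneg
  have hle : C.basis.repr (P.μ C - x - α) γ ≤ -1 := by
    obtain ⟨m, hm⟩ := C.repr_mem_rootLattice hY γ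
    rw [hm] at hneg ⊢
    have : m < 0 := by exact_mod_cast hneg
    exact_mod_cast (show m ≤ -1 by omega)
  have hp : 1 ≤ pairing (γ : V) α := one_le_pairing (C.subset γ.2) hα
    ((pairing_pos_comm hα0 (C.ne_zero_of_mem γ.2)).1 hγ)
  have hrest : ∑ j ∈ Finset.univ.erase γ, C.basis.repr (P.μ C - x - α) j * coroot α j ≤ 0 :=
    Finset.sum_nonpos fun j hj => mul_nonpos_of_nonneg_of_nonpos
      (hcoord j (Finset.ne_of_mem_erase hj)) (by
        rw [coroot_apply, ← pairing_nonpos_comm hα0 (C.ne_zero_of_mem j.2)]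
        exact hpair j (Finset.ne_of_mem_erase hj))
  have hw := C.map_eq_sum_repr (coroot α) (P.μ C - x - α)
  rw [← Finset.add_sum_erase _ _ (Finset.mem_univ γ)] at hw
  have hpw : coroot α (P.μ C - x - α) = pairing (P.μ C) α - 1 := by
    simp only [map_sub, coroot_apply, hxα, pairing_self hα0]
    ring
  simp only [coroot_apply] at hw hrest hpw
  obtain ⟨r, hr, hμ⟩ := P.exists_sub_reflect C γ.2
  have hμ' : P.μ (C.reflect (C.subset γ.2)) = P.μ C - (r : ℝ) • (γ : V) := by
    rw [← hμ, sub_sub_cancel]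
  have hspec := hP.pairing_nonneg _ (C.mem_reflect_cone_of_ne hα hαC γ hne)
  rw [hμ', ← coroot_apply, map_sub, map_smul, coroot_apply, coroot_apply, smul_eq_mul] at hspec
  have hr' : (1 : ℝ) ≤ r := by exact_mod_cast hr
  nlinarith

/-- Reflecting in a simple root `β` with `⟨α, β^∨⟩ > 0` lowers the height of `α`, and the vertex
across the wall of `β` is `μ_C - rβ`, so the induction hypothesis controls every coordinate of
`μ_C - x - α` except the one along `β`. -/
lemma sub_root_mem_cone_of_height_le (hP : IsSpecial P) (hα : α ∈ R.Δ)
    (hxα : pairing x α = -1) (hY : ∀ C : Base R, P.μ C - x ∈ rootLattice R)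
    (hx : ∀ C : Base R, P.μ C - x ∈ C.cone) (N : ℕ) :
    ∀ C : Base R, α ∈ C.cone → C.height α ≤ N → P.μ C - x - α ∈ C.cone := by
  induction N with
  | zero =>
    intro C hαC hN
    rw [Nat.cast_zero] at hN
    linarith [C.one_le_height hα hαC]
  | succ N ih =>
    intro C hαC hN
    by_cases hαS : α ∈ C.S
    · exact sub_simple_root_mem_cone hP ⟨α, hαS⟩ hxα (hx C) (hY C)
    have hcoord : ∀ β : C.S, 0 < pairing α β →
        ∀ j : C.S, j ≠ β → 0 ≤ C.basis.repr (P.μ C - x - α) j := by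
      intro β hβ j hj
      obtain ⟨r, -, hμ⟩ := P.exists_sub_reflect C β.2
      refine C.repr_nonneg_of_mem_reflect_cone β (t := r) ?_ hj
      have hne : α ≠ β := fun h => hαS (h ▸ β.2)
      have hreflect := ih _ (C.mem_reflect_cone_of_ne hα hαC β hne) (by
        rw [C.height_reflect_eq]
        push_cast at hN
        linarith [one_le_pairing hα (C.subset β.2) hβ])
      convert hreflect using 1
      rw [← hμ]
      abel
    obtain ⟨γ, hγ⟩ := C.exists_pairing_pos hαC (R.nonzero α hα)
    intro j
    by_cases hj : j = γ
    swap
    · exact hcoord γ hγ j hj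
    subst hj
    by_cases hpos : ∃ β : C.S, β ≠ j ∧ 0 < pairing α β
    · obtain ⟨β, hβ, hβpos⟩ := hpos
      exact hcoord β hβpos j (Ne.symm hβ)
    push Not at hpos
    exact repr_sub_root_nonneg_of_pairing_nonpos hP hα hαC hxα
      (sub_mem (hY C) (AddSubgroup.subset_closure hα)) j (fun h => hαS (h ▸ j.2)) hγ
      (hcoord j hγ) hpos

lemma sub_root_mem_cone (hP : IsSpecial P) (hα : α ∈ R.Δ) (hxα : pairing x α = -1)
    (hY : ∀ C : Base R, P.μ C - x ∈ rootLattice R) (hx : ∀ C : Base R, P.μ C - x ∈ C.cone)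
    (C : Base R) : P.μ C - x - α ∈ C.cone := by
  rcases C.mem_cone_or_neg_mem_cone hα with hαC | hαC
  · exact sub_root_mem_cone_of_height_le hP hα hxα hY hx _ C hαC (Nat.le_ceil _)
  · rw [sub_eq_add_neg]
    exact Base.add_mem_cone (hx C) hαC

lemma add_root_mem_latticePts (hP : IsSpecial P) (hα : α ∈ R.Δ) (hxα : pairing x α = -1)
    (hx : x ∈ latticePts P) : x + α ∈ latticePts P := by
  obtain ⟨hxP, hY⟩ := hx
  have : Nonempty (Base R) :=
    Set.range_nonempty_iff_nonempty.1 (convexHull_nonempty_iff.1 ⟨x, hxP⟩)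
  have hY' : ∀ C : Base R, P.μ C - x ∈ rootLattice R := fun C => by
    simpa using neg_mem (hY C)
  refine ⟨P.mem_carrier_iff.2 fun C => ?_, fun C => ?_⟩
  · rw [← sub_sub]
    exact sub_root_mem_cone hP hα hxα hY' (P.mem_carrier_iff.1 hxP) C
  · rw [add_sub_right_comm]
    exact add_mem (hY C) (AddSubgroup.subset_closure hα)

lemma add_root_mem_latticePts_iff (hP : IsSpecial P) (hα : α ∈ R.Δ)
    (hxα : pairing x α = -1) : x + α ∈ latticePts P ↔ x ∈ latticePts P := by
  refine ⟨fun h => ?_, add_root_mem_latticePts hP hα hxα⟩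
  have hneg : pairing (x + α) (-α) = -1 := by
    rw [pairing_neg_right, ← coroot_apply, map_add, coroot_apply, coroot_apply, hxα,
      pairing_self (R.nonzero α hα)]
    norm_num
  simpa using add_root_mem_latticePts hP (R.neg_mem α hα) hneg h

end RootStep

theorem stmt8_general {V : Type*} [NormedAddCommGroup V] [InnerProductSpace ℝ V]
    {R : RootSystemData V} (B : Base R)
    (P : AmplePolytope R) (hP : IsSpecial P) (x y : V) (hx : IsWeight R x)
    (hplay : ∃ l : List V, CutoffLegal B x l ∧ playRes x l = y) :
    x ∈ latticePts P ↔ y ∈ latticePts P := by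
  obtain ⟨l, hlegal, rfl⟩ := hplay
  induction l generalizing x with
  | nil => rfl
  | cons α l ih =>
    obtain ⟨hallowed, hαS, hneg, hlegal⟩ := hlegal
    have hα : α ∈ R.Δ := B.subset hαS
    have hxα : pairing x α = -1 := hx.pairing_eq_neg_one hα (hallowed α hαS) hneg
    change x ∈ latticePts P ↔ playRes (fireRoot x α) l ∈ latticePts P
    rw [fireRoot_eq_add hxα] at hlegal ⊢
    rw [← ih (x + α) (hx.add_root hα) hlegal, add_root_mem_latticePts_iff hP hα hxα]

/-- If `P` is a special ample polytope and `y` is obtained from a weight `x`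
by playing the numbers game with a cutoff, then `x ∈ Λ(P)` iff `y ∈ Λ(P)`. -/
theorem stmt8 {V : Type*} [NormedAddCommGroup V] [InnerProductSpace ℝ V]
    [FiniteDimensional ℝ V] {R : RootSystemData V} (B : Base R)
    (P : AmplePolytope R) (hP : IsSpecial P) (x y : V) (hx : IsWeight R x)
    (hplay : ∃ l : List V, CutoffLegal B x l ∧ playRes x l = y) :
    x ∈ latticePts P ↔ y ∈ latticePts P :=
  stmt8_general B P hP x y hx hplay
end

section
/- For the root system A_2 with root lattice Y, the ample polytopes for the toric variety of the Weyl fan are diagonally split for every integer q ≥ 2: for every z ∈ (1/q)Y / Y there is a representative z̃ ∈ (1/q)Y such that |⟨w z̃, ω_i⟩| < 1 for every Weyl group element w and both fundamental coweights ω_i. -/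
open scoped BigOperators

/-- The simple reflection `s_i` acting on root coordinates (coordinates with respect to the
simple roots `α_k`), where `C k i = ⟨α_k, α_i^∨⟩` is the Cartan matrix:
`(s_i v)_i = v_i - ∑_k c_{ki} v_k` and the other coordinates are unchanged. -/
def qRefl {n : ℕ} (C : Matrix (Fin n) (Fin n) ℤ) (i : Fin n) (v : Fin n → ℚ) :
    Fin n → ℚ :=
  fun j => if j = i then v i - ∑ k, (C k i : ℚ) * v k else v j

/-- The action on root coordinates of the Weyl group element given by the word `l` of
simple reflections. -/
def weylAct {n : ℕ} (C : Matrix (Fin n) (Fin n) ℤ) (l : List (Fin n)) (v : Fin n → ℚ) :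
    Fin n → ℚ :=
  l.foldl (fun u i => qRefl C i u) v

/-- The Cartan matrix of `A₂`. -/
def cartanA2 : Matrix (Fin 2) (Fin 2) ℤ := !![2, -1; -1, 2]

/-- Invariant preserved by the A₂ Weyl action. -/
def GoodA2 (v : Fin 2 → ℚ) : Prop :=
  (-1 < v 0 ∧ v 0 < 1) ∧ (-1 < v 1 ∧ v 1 < 1) ∧ (-1 < v 0 - v 1 ∧ v 0 - v 1 < 1)

lemma goodA2_refl (i : Fin 2) (v : Fin 2 → ℚ) (h : GoodA2 v) :
    GoodA2 (qRefl cartanA2 i v) := by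
  obtain ⟨⟨h0l, h0r⟩, ⟨h1l, h1r⟩, ⟨hdl, hdr⟩⟩ := h
  fin_cases i <;>
    simp only [GoodA2, qRefl, cartanA2, Fin.sum_univ_two, Fin.isValue,
      Matrix.cons_val', Matrix.cons_val_zero, Matrix.cons_val_one, Matrix.head_cons,
      Matrix.empty_val', Matrix.cons_val_fin_one, Matrix.head_fin_const,
      Fin.ext_iff, if_true, if_false]
  all_goals
    push_cast; norm_num
    exact ⟨⟨by linarith, by linarith⟩, ⟨by linarith, by linarith⟩, by linarith, by linarith⟩

lemma goodA2_weyl (l : List (Fin 2)) (v : Fin 2 → ℚ) (h : GoodA2 v) :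
    GoodA2 (weylAct cartanA2 l v) := by
  induction l generalizing v with
  | nil => exact h
  | cons i l ih => exact ih _ (goodA2_refl i v h)

/-- For the root system `A₂`, ample polytopes for the Weyl-fan toric variety
are diagonally split for every `q ≥ 2`: every class `z ∈ (1/q)Y / Y` (in root coordinates,
`z : Fin 2 → ℚ` with `q z` integral) has a representative `z̃ ∈ (1/q)Y` with `z̃ - z ∈ Y`
such that `|⟨w z̃, ωᵢ⟩| < 1` for every Weyl group element `w` and both fundamental
coweights `ωᵢ` (note `⟨v, ωᵢ⟩` is the `i`-th root coordinate of `v`). -/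
theorem stmt15 (q : ℤ) (hq : 2 ≤ q) (z : Fin 2 → ℚ)
    (hz : ∀ i, ∃ n : ℤ, (q : ℚ) * z i = n) :
    ∃ zt : Fin 2 → ℚ,
      (∀ i, ∃ n : ℤ, (q : ℚ) * zt i = n) ∧
      (∀ i, ∃ n : ℤ, zt i - z i = n) ∧
      ∀ (l : List (Fin 2)) (i : Fin 2), |weylAct cartanA2 l zt i| < 1 := by
  refine ⟨fun i => Int.fract (z i), ?_, ?_, ?_⟩
  · intro i
    obtain ⟨n, hn⟩ := hz i
    refine ⟨n - q * ⌊z i⌋, ?_⟩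
    simp only [← Int.self_sub_floor]
    push_cast
    rw [mul_sub, hn]
  · intro i
    exact ⟨-⌊z i⌋, by simp only [← Int.self_sub_floor]; push_cast; ring⟩
  · intro l i
    have hg : GoodA2 fun i => Int.fract (z i) := by
      have f0 := Int.fract_nonneg (z 0)
      have f0' := Int.fract_lt_one (z 0)
      have f1 := Int.fract_nonneg (z 1)
      have f1' := Int.fract_lt_one (z 1)
      refine ⟨⟨by linarith, f0'⟩, ⟨by linarith, f1'⟩, ⟨by linarith, by linarith⟩⟩
    have := goodA2_weyl l _ hg
    obtain ⟨⟨a, b⟩, ⟨c, d⟩, -⟩ := this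
    fin_cases i
    · exact abs_lt.mpr ⟨a, b⟩
    · exact abs_lt.mpr ⟨c, d⟩
end

section
/- For the root system G_2, ample polytopes for the toric variety of the Weyl fan are not diagonally split for any integer q ≥ 2: with p = ⌊q/2⌋, α_1 the short and α_2 the long simple root, the class of z = (p/q)α_2 in (1/q)Y / Y has no representative z̃ ∈ (1/q)Y satisfying |⟨w z̃, ω_i⟩| < 1 for all Weyl group elements w and both fundamental coweights ω_i. -/
open scoped BigOperators

/-- The Cartan matrix of `G₂`, with index `0` the short simple root `α₁` and index `1` the
long simple root `α₂`: `C k i = ⟨α_k, α_i^∨⟩`, so `C 0 1 = -1` and `C 1 0 = -3`. -/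
def cartanG2 : Matrix (Fin 2) (Fin 2) ℤ := !![2, -1; -3, 2]

/-!
The class of `(p/q) α₂` consists of the vectors `a α₁ + (c + m) α₂` with `a, m ∈ ℤ` and
`c = ⌊q/2⌋/q ∈ [1/3, 1/2]`. The bound for `w = 1` forces `a = 0`, and then the bound for
`w = s₁` asks for `|3 (c + m)| < 1`, i.e. `c + m` within `1/3` of `0`, which the fractional
part `c` rules out.
-/

lemma weylAct_nil {n : ℕ} (C : Matrix (Fin n) (Fin n) ℤ) (v : Fin n → ℚ) :
    weylAct C [] v = v :=
  rfl

lemma weylAct_cartanG2_singleton_zero (v : Fin 2 → ℚ) :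
    weylAct cartanG2 [0] v 0 = 3 * v 1 - v 0 := by
  simp only [weylAct, qRefl, List.foldl, cartanG2, Fin.sum_univ_two]
  norm_num
  ring

lemma Int.eq_zero_of_abs_cast_lt_one {R : Type*} [Ring R] [LinearOrder R]
    [IsStrictOrderedRing R] {a : ℤ} (h : |(a : R)| < 1) : a = 0 :=
  Int.abs_lt_one_iff.mp (by exact_mod_cast h)

lemma Int.ediv_two_div_mem_Icc {q : ℤ} (hq : 2 ≤ q) :
    ((q / 2 : ℤ) : ℚ) / q ∈ Set.Icc (1 / 3) (1 / 2) := by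
  have hq0 : (0 : ℚ) < q := by exact_mod_cast (show (0 : ℤ) < q by omega)
  have hlow : (q : ℚ) ≤ 3 * ((q / 2 : ℤ) : ℚ) := by
    exact_mod_cast (show q ≤ 3 * (q / 2) by omega)
  have hhigh : 2 * ((q / 2 : ℤ) : ℚ) ≤ q := by
    exact_mod_cast (show 2 * (q / 2) ≤ q by omega)
  constructor
  · rw [div_le_div_iff₀ (by norm_num) hq0]; linarith
  · rw [div_le_div_iff₀ hq0 (by norm_num)]; linarith

lemma one_le_abs_three_mul_add_intCast {K : Type*} [Field K] [LinearOrder K]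
    [IsStrictOrderedRing K] {c : K} (hc : c ∈ Set.Icc (1 / 3) (2 / 3)) (m : ℤ) :
    1 ≤ |3 * (c + m)| := by
  obtain ⟨hc1, hc2⟩ := hc
  rcases le_or_gt 0 m with hm | hm
  · have : (0 : K) ≤ m := by exact_mod_cast hm
    exact le_abs.mpr (Or.inl (by linarith))
  · have : (m : K) ≤ -1 := by exact_mod_cast (show m ≤ -1 by omega)
    exact le_abs.mpr (Or.inr (by linarith))

/-- For the root system `G₂` and any `q ≥ 2`, ample polytopes for the
Weyl-fan toric variety are not diagonally split: with `p = ⌊q/2⌋`, the class of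
`z = (p/q) α₂` in `(1/q)Y / Y` has no representative `z̃ ∈ (1/q)Y` with
`|⟨w z̃, ωᵢ⟩| < 1` for all Weyl group elements `w` and both fundamental coweights. -/
theorem stmt16 (q : ℤ) (hq : 2 ≤ q) :
    ¬ ∃ zt : Fin 2 → ℚ,
      (∀ i, ∃ n : ℤ, (q : ℚ) * zt i = n) ∧
      (∀ i, ∃ n : ℤ,
        zt i - (if i = 1 then ((q / 2 : ℤ) : ℚ) / (q : ℚ) else 0) = n) ∧
      ∀ (l : List (Fin 2)) (i : Fin 2), |weylAct cartanG2 l zt i| < 1 := by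
  rintro ⟨zt, -, hrep, hbound⟩
  obtain ⟨a, ha⟩ := hrep 0
  obtain ⟨m, hm⟩ := hrep 1
  simp only [Fin.isValue, zero_ne_one, if_false, sub_zero, if_true] at ha hm
  have hzt0 : zt 0 = 0 := by
    have h := hbound [] 0
    rw [weylAct_nil, ha] at h
    rw [ha, Int.eq_zero_of_abs_cast_lt_one h, Int.cast_zero]
  have hzt1 : zt 1 = ((q / 2 : ℤ) : ℚ) / q + m := by linarith
  have hc : ((q / 2 : ℤ) : ℚ) / q ∈ Set.Icc (1 / 3) (2 / 3) :=
    Set.Icc_subset_Icc_right (by norm_num) (Int.ediv_two_div_mem_Icc hq)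
  have h := hbound [0] 0
  rw [weylAct_cartanG2_singleton_zero, hzt0, sub_zero, hzt1] at h
  exact (one_le_abs_three_mul_add_intCast hc m).not_gt h
end

section
/- For the root system A_3 and any even integer q ≥ 2, ample polytopes are not diagonally split: the class of z = (1/2)α_1 + (1/2)α_3 in (1/q)Y / Y has no representative z̃ ∈ (1/q)Y with |⟨w z̃, ω_i⟩| < 1 for all Weyl group elements w and all fundamental coweights ω_i; in particular ⟨s_2 z, ω_2⟩ = 1. -/
open scoped BigOperators

/-- The Cartan matrix of `A₃`, with the simple roots `α₁, α₂, α₃` linearly ordered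
(index `1` is the central vertex `α₂`). -/
def cartanA3 : Matrix (Fin 3) (Fin 3) ℤ := !![2, -1, 0; -1, 2, -1; 0, -1, 2]

/-- The element `z = (1/2) α₁ + (1/2) α₃` in root coordinates. -/
def zA3 : Fin 3 → ℚ := ![1/2, 0, 1/2]

/-!
A representative `z̃ ∈ z + Y` with `|⟨z̃, ωᵢ⟩| < 1` (the condition for `w = 1`) must have
coordinates `(±1/2, 0, ±1/2)`. If the two signs agree, `⟨s₂ z̃, ω₂⟩ = z̃₁ + z̃₃ = ±1`; if they
differ, `⟨s₂ s₁ z̃, ω₂⟩ = z̃₃ - z̃₁ = ±1`. Either way the bound fails.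
-/

section HalfIntegers

variable {K : Type*} [Field K] [LinearOrder K] [IsStrictOrderedRing K]

theorem intCast_eq_zero_of_abs_lt_one {n : ℤ} (h : |(n : K)| < 1) : (n : K) = 0 := by
  have : |n| < 1 := by exact_mod_cast h
  simp [Int.abs_lt_one_iff.mp this]

theorem abs_eq_half_of_sub_half_eq_intCast {x : K} {n : ℤ} (hn : x - 1 / 2 = n)
    (hx : |x| < 1) : |x| = 1 / 2 := by
  rw [abs_lt] at hx
  have hlo : ((-2 : ℤ) : K) < ((2 * n + 1 : ℤ) : K) := by push_cast; linarith
  have hhi : ((2 * n + 1 : ℤ) : K) < ((2 : ℤ) : K) := by push_cast; linarith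
  have : n = 0 ∨ n = -1 := by
    have := Int.cast_lt.mp hlo
    have := Int.cast_lt.mp hhi
    omega
  have hx' : x = n + 1 / 2 := by linarith
  rcases this with rfl | rfl <;> norm_num [hx', abs_of_neg]

theorem abs_add_eq_one_or_abs_sub_eq_one {a c : K} (ha : |a| = 1 / 2) (hc : |c| = 1 / 2) :
    |a + c| = 1 ∨ |c - a| = 1 := by
  rcases abs_eq (by norm_num) |>.mp ha with rfl | rfl <;>
    rcases abs_eq (by norm_num) |>.mp hc with rfl | rfl <;> norm_num

end HalfIntegers

theorem weylAct_cartanA3_s₂ (v : Fin 3 → ℚ) : weylAct cartanA3 [1] v 1 = v 0 - v 1 + v 2 := by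
  simp [weylAct, qRefl, cartanA3, Fin.sum_univ_three]
  ring

theorem weylAct_cartanA3_s₂s₁ (v : Fin 3 → ℚ) : weylAct cartanA3 [0, 1] v 1 = v 2 - v 0 := by
  simp [weylAct, qRefl, cartanA3, Fin.sum_univ_three]
  ring

theorem stmt17_general (q : ℤ) :
    (¬ ∃ zt : Fin 3 → ℚ,
      (∀ i, ∃ n : ℤ, (q : ℚ) * zt i = n) ∧
      (∀ i, ∃ n : ℤ, zt i - zA3 i = n) ∧
      ∀ (l : List (Fin 3)) (i : Fin 3), |weylAct cartanA3 l zt i| < 1) ∧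
    weylAct cartanA3 [1] zA3 1 = 1 := by
  refine ⟨?_, ?_⟩
  swap
  · rw [weylAct_cartanA3_s₂]
    norm_num [zA3, Matrix.cons_val_two, Matrix.vecHead, Matrix.vecTail]
  rintro ⟨zt, -, hcoset, hbound⟩
  obtain ⟨n₀, hn₀⟩ := hcoset 0
  obtain ⟨n₁, hn₁⟩ := hcoset 1
  obtain ⟨n₂, hn₂⟩ := hcoset 2
  change zt 0 - 1 / 2 = n₀ at hn₀
  change zt 1 - 0 = n₁ at hn₁
  change zt 2 - 1 / 2 = n₂ at hn₂
  have hz₁ : zt 1 = 0 := by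
    have h : |zt 1| < 1 := hbound [] 1
    rw [sub_zero] at hn₁
    rw [hn₁] at h ⊢
    exact intCast_eq_zero_of_abs_lt_one h
  have hz₀ := abs_eq_half_of_sub_half_eq_intCast hn₀ (hbound [] 0)
  have hz₂ := abs_eq_half_of_sub_half_eq_intCast hn₂ (hbound [] 2)
  rcases abs_add_eq_one_or_abs_sub_eq_one hz₀ hz₂ with h | h
  · have := hbound [1] 1
    rw [weylAct_cartanA3_s₂, hz₁, sub_zero, h] at this
    exact lt_irrefl _ this
  · have := hbound [0, 1] 1
    rw [weylAct_cartanA3_s₂s₁, h] at this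
    exact lt_irrefl _ this

/-- For the root system `A₃` and any even `q ≥ 2`, ample polytopes are not
diagonally split: the class of `z = (1/2)α₁ + (1/2)α₃` in `(1/q)Y / Y` has no
representative `z̃ ∈ (1/q)Y` with `|⟨w z̃, ωᵢ⟩| < 1` for all Weyl group elements `w` and
all fundamental coweights `ωᵢ`; in particular `⟨s₂ z, ω₂⟩ = 1`. -/
theorem stmt17 (q : ℤ) (hq : 2 ≤ q) (heven : Even q) :
    (¬ ∃ zt : Fin 3 → ℚ,
      (∀ i, ∃ n : ℤ, (q : ℚ) * zt i = n) ∧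
      (∀ i, ∃ n : ℤ, zt i - zA3 i = n) ∧
      ∀ (l : List (Fin 3)) (i : Fin 3), |weylAct cartanA3 l zt i| < 1) ∧
    weylAct cartanA3 [1] zA3 1 = 1 :=
  stmt17_general q
end
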